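/- arXiv:1211.4323 — 3 statements merged into one kernel-verified Lean document; each statement's English description precedes it below -/
import Mathlib

section
/- (Equidistribution under splitness.) Fix s ≥ 1, K > 0, and integers m_{j,c} (1 ≤ j ≤ s, 1 ≤ c ≤ 3), not all zero. For every ε' > 0 there is A₀ > 0 such that: for every A ≥ A₀, every matrix (a₁,b₁;a₂,b₂) ∈ G_η, every integers (k_j, l_j)_{j ≤ s} for which the points t^{(j)} = (⌊ln|a₁k_j + b₁l_j|⌋, ⌊ln|a₂k_j + b₂l_j|⌋) form an A-split family, every real numbers φ₁,…,φ_s, and every C¹ probability density ρ on ℝ⁴ supported in [−K,K]⁴ with ‖ρ‖_{C¹} ≤ K, one has | ∫_{ℝ⁴} ∏_{j=1}^s exp(2πi [ m_{j,1}(a₁k_j + b₁l_j)u + m_{j,2}(a₂k_j + b₂l_j)v + m_{j,3}(k_j x + l_j y + φ_j) ]) ρ(u,v,x,y) du dv dx dy | ≤ ε'. Consequently, the joint distribution of the 3s-tuple ( {(a₁k_j+b₁l_j)u}, {(a₂k_j+b₂l_j)v}, {k_j x + l_j y + φ_j} )_{j ≤ s} converges to the uniform distribution on 𝕋^{3s},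 uniformly over all such data. -/
/-!
Write `e(x) = exp(2πix)`. After multiplying out, the integrand is `e(ℓ w + θ) ρ(w)` for a linear
form `ℓ` on `ℝ⁴` whose coefficients are `∑ m_{j,1} N₁⁽ʲ⁾`, `∑ m_{j,2} N₂⁽ʲ⁾`, `∑ m_{j,3} k_j`,
`∑ m_{j,3} l_j`, where `N₁⁽ʲ⁾ = a₁k_j + b₁l_j` and `N₂⁽ʲ⁾ = a₂k_j + b₂l_j`. Integrating by parts
in a direction `v` gives `2π |ℓ v| |∫ e(ℓ w + θ) ρ| ≤ ∫ |∂_v ρ|`, which is bounded in terms of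
`K` only, so it suffices that some coefficient of `ℓ` has size `≳ e^A`.

Splitness says the sizes `|N₁⁽ʲ⁾|`, `|N₂⁽ʲ⁾|` and `max(|N₁⁽ʲ⁾|, |N₂⁽ʲ⁾|)` all exceed `e^A` and
are lacunary with ratio `e^(A-1)`. In a lacunary sum with bounded integer weights the largest
term dominates, which makes the first two coefficients large when `m_{·,1}` or `m_{·,2}` is
nonzero. Otherwise, since `(k, l)` is the image of `(N₁, N₂)` under the inverse matrix,
which is close to the identity, one of the last two coefficients is large.
-/

open MeasureTheory Real

noncomputable section

def IsSplit (A : ℝ) {s : ℕ} (t : Fin s → ℝ × ℝ) : Prop :=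
  (∀ i, A < (t i).1 ∧ A < (t i).2) ∧
  ∀ i j, i ≠ j → A ≤ |(t i).1 - (t j).1| ∧ A ≤ |(t i).2 - (t j).2| ∧
    A ≤ |max (t i).1 (t i).2 - max (t j).1 (t j).2|

section Oscillatory

variable {E : Type*} [NormedAddCommGroup E] [NormedSpace ℝ E]

theorem hasFDerivAt_cexp_phase (ℓ : E →L[ℝ] ℝ) (θ : ℝ) (w : E) :
    HasFDerivAt (fun w => Complex.exp (2 * π * Complex.I * ((ℓ w + θ : ℝ) : ℂ)))
      (Complex.exp (2 * π * Complex.I * ((ℓ w + θ : ℝ) : ℂ)) •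
        (2 * π * Complex.I) • (Complex.ofRealCLM.comp ℓ)) w := by
  have h1 : HasFDerivAt (fun w => ((ℓ w + θ : ℝ) : ℂ)) (Complex.ofRealCLM.comp ℓ) w :=
    Complex.ofRealCLM.hasFDerivAt.comp w (ℓ.hasFDerivAt.add_const θ)
  exact (h1.const_mul (2 * π * Complex.I)).cexp

theorem norm_cexp_two_pi_I_mul (x : ℝ) : ‖Complex.exp (2 * π * Complex.I * x)‖ = 1 := by
  rw [show 2 * π * Complex.I * x = ((2 * π * x : ℝ) : ℂ) * Complex.I by push_cast; ring,
    Complex.norm_exp_ofReal_mul_I]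

variable [FiniteDimensional ℝ E] [MeasurableSpace E] [BorelSpace E]
  (μ : Measure E) [μ.IsAddHaarMeasure]

theorem mul_norm_integral_cexp_phase_mul_le (ℓ : E →L[ℝ] ℝ) (θ : ℝ) (v : E) {ρ : E → ℝ}
    (hρ : ContDiff ℝ 1 ρ) (hρc : HasCompactSupport ρ) :
    2 * π * |ℓ v| * ‖∫ w, Complex.exp (2 * π * Complex.I * ((ℓ w + θ : ℝ) : ℂ)) * ρ w ∂μ‖
      ≤ ∫ w, |fderiv ℝ ρ w v| ∂μ := by
  set e : E → ℂ := fun w => Complex.exp (2 * π * Complex.I * ((ℓ w + θ : ℝ) : ℂ))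
  have he : Continuous e := by fun_prop
  have hρ' : ∀ w, HasFDerivAt (fun w => (ρ w : ℂ))
      (Complex.ofRealCLM.comp (fderiv ℝ ρ w)) w := fun w =>
    Complex.ofRealCLM.hasFDerivAt.comp w ((hρ.differentiable one_ne_zero) w).hasFDerivAt
  have hρc' : HasCompactSupport (fun w => (ρ w : ℂ)) := hρc.comp_left Complex.ofReal_zero
  have hdρ : Continuous fun w => ((fderiv ℝ ρ w v : ℝ) : ℂ) := by
    have := hρ.continuous_fderiv one_ne_zero
    fun_prop
  have hdρc : HasCompactSupport fun w => ((fderiv ℝ ρ w v : ℝ) : ℂ) :=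
    (hρc.fderiv ℝ).comp_left (g := fun L : E →L[ℝ] ℝ => ((L v : ℝ) : ℂ)) (by simp)
  have hint₁ : Integrable (fun w => ((fderiv ℝ ρ w v : ℝ) : ℂ) * e w) μ :=
    (hdρ.mul he).integrable_of_hasCompactSupport hdρc.mul_right
  have hint₂ : Integrable (fun w => (ρ w : ℂ) * (e w * (2 * π * Complex.I * ℓ v))) μ :=
    (by fun_prop : Continuous _).integrable_of_hasCompactSupport hρc'.mul_right
  have hint₃ : Integrable (fun w => (ρ w : ℂ) * e w) μ :=
    (by fun_prop : Continuous _).integrable_of_hasCompactSupport hρc'.mul_right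
  have hparts := integral_bilinear_hasFDerivAt_right_eq_neg_left_of_integrable
    (μ := μ) (v := v) (B := ContinuousLinearMap.mul ℝ ℂ) (f := fun w => (ρ w : ℂ)) (g := e)
    (by simpa using hint₁) (by simpa [e] using hint₂) (by simpa using hint₃)
    (fun w _ => hρ' w) (fun w _ => hasFDerivAt_cexp_phase ℓ θ w)
  simp only [ContinuousLinearMap.mul_apply', FunLike.coe_smul, Pi.smul_apply,
    ContinuousLinearMap.coe_comp, Function.comp_apply, Complex.ofRealCLM_apply,
    smul_eq_mul] at hparts
  have hlhs : 2 * π * Complex.I * ℓ v * ∫ w, e w * ρ w ∂μ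
      = -∫ w, ((fderiv ℝ ρ w v : ℝ) : ℂ) * e w ∂μ := by
    rw [← hparts, ← integral_const_mul]; congr 1; ext w; simp only [e]; ring
  calc 2 * π * |ℓ v| * ‖∫ w, e w * ρ w ∂μ‖
      = ‖-∫ w, ((fderiv ℝ ρ w v : ℝ) : ℂ) * e w ∂μ‖ := by
        rw [← hlhs, norm_mul]
        simp [abs_of_pos pi_pos]
    _ = ‖∫ w, ((fderiv ℝ ρ w v : ℝ) : ℂ) * e w ∂μ‖ := norm_neg _
    _ ≤ ∫ w, ‖((fderiv ℝ ρ w v : ℝ) : ℂ) * e w‖ ∂μ := norm_integral_le_integral_norm _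
    _ = ∫ w, |fderiv ℝ ρ w v| ∂μ := by
        congr 1; ext w
        rw [norm_mul, norm_cexp_two_pi_I_mul, mul_one, Complex.norm_real, Real.norm_eq_abs]

end Oscillatory

theorem integral_abs_fderiv_apply_le {F : Type*} [NormedAddCommGroup F] [NormedSpace ℝ F]
    [ProperSpace F] [MeasurableSpace F] [OpensMeasurableSpace F] (ν : Measure F)
    [IsFiniteMeasureOnCompacts ν] {ρ : F → ℝ} {K R : ℝ} (v : F)
    (hsupp : tsupport ρ ⊆ Metric.closedBall 0 R) (hd : ∀ w, ‖fderiv ℝ ρ w‖ ≤ K) :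
    ∫ w, |fderiv ℝ ρ w v| ∂ν ≤ K * ‖v‖ * ν.real (Metric.closedBall 0 R) := by
  have hzero : ∀ w ∉ Metric.closedBall (0 : F) R, |fderiv ℝ ρ w v| = 0 := by
    intro w hw
    rw [Function.notMem_support.1 (fun h => hw (hsupp (support_fderiv_subset ℝ h)))]
    simp
  rw [← setIntegral_eq_integral_of_forall_compl_eq_zero hzero]
  refine (le_abs_self _).trans ?_
  rw [← Real.norm_eq_abs]
  refine norm_setIntegral_le_of_norm_le_const (isCompact_closedBall 0 R).measure_lt_top
    fun w _ => ?_
  rw [Real.norm_eq_abs, abs_abs, ← Real.norm_eq_abs]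
  exact (fderiv ℝ ρ w).le_of_opNorm_le (hd w) v

open ContinuousLinearMap in
def coordForm (c₁ c₂ c₃ c₄ : ℝ) : (ℝ × ℝ × ℝ × ℝ) →L[ℝ] ℝ :=
  c₁ • fst ℝ ℝ _ + c₂ • (fst ℝ ℝ _).comp (snd ℝ ℝ _) +
    c₃ • (fst ℝ ℝ _).comp ((snd ℝ ℝ _).comp (snd ℝ ℝ _)) +
    c₄ • (snd ℝ ℝ _).comp ((snd ℝ ℝ _).comp (snd ℝ ℝ _))

@[simp]
theorem coordForm_apply (c₁ c₂ c₃ c₄ : ℝ) (w : ℝ × ℝ × ℝ × ℝ) :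
    coordForm c₁ c₂ c₃ c₄ w = c₁ * w.1 + c₂ * w.2.1 + c₃ * w.2.2.1 + c₄ * w.2.2.2 := by
  simp [coordForm]

-- Instance search does not unfold `volume` on nested products by itself.
instance : (volume : Measure (ℝ × ℝ × ℝ)).IsAddHaarMeasure := Measure.prod.instIsAddHaarMeasure _ _

instance : (volume : Measure (ℝ × ℝ × ℝ × ℝ)).IsAddHaarMeasure :=
  Measure.prod.instIsAddHaarMeasure _ _

theorem exists_norm_le_one_le_abs_coordForm {M c₁ c₂ c₃ c₄ : ℝ}
    (h : M ≤ |c₁| ∨ M ≤ |c₂| ∨ M ≤ |c₃| ∨ M ≤ |c₄|) :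
    ∃ v, ‖v‖ ≤ 1 ∧ M ≤ |coordForm c₁ c₂ c₃ c₄ v| := by
  rcases h with h | h | h | h
  · exact ⟨(1, 0, 0, 0), by simp, by simpa using h⟩
  · exact ⟨(0, 1, 0, 0), by simp, by simpa using h⟩
  · exact ⟨(0, 0, 1, 0), by simp, by simpa using h⟩
  · exact ⟨(0, 0, 0, 1), by simp, by simpa using h⟩

theorem prod_cexp_phase_eq {ι : Type*} [Fintype ι] (m : ι → Fin 3 → ℤ) (N₁ N₂ p q φ : ι → ℝ)
    (w : ℝ × ℝ × ℝ × ℝ) :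
    ∏ j, Complex.exp (2 * π * Complex.I *
        ((m j 0 * (N₁ j * w.1) + m j 1 * (N₂ j * w.2.1)
          + m j 2 * (p j * w.2.2.1 + q j * w.2.2.2 + φ j) : ℝ) : ℂ))
      = Complex.exp (2 * π * Complex.I *
        ((coordForm (∑ j, m j 0 * N₁ j) (∑ j, m j 1 * N₂ j) (∑ j, m j 2 * p j)
          (∑ j, m j 2 * q j) w + ∑ j, m j 2 * φ j : ℝ) : ℂ)) := by
  rw [← Complex.exp_sum, ← Finset.mul_sum, ← Complex.ofReal_sum, coordForm_apply]
  congr 3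
  simp only [Finset.sum_mul, ← Finset.sum_add_distrib]
  exact Finset.sum_congr rfl fun j _ => by ring

theorem norm_integral_cexp_phase_mul_le_of_le_abs (ℓ : (ℝ × ℝ × ℝ × ℝ) →L[ℝ] ℝ) (θ : ℝ)
    {v : ℝ × ℝ × ℝ × ℝ} {K M : ℝ} {ρ : ℝ × ℝ × ℝ × ℝ → ℝ} (hρ : ContDiff ℝ 1 ρ)
    (hdρ : ∀ w, ‖fderiv ℝ ρ w‖ ≤ K)
    (hsupp : ∀ w, ρ w ≠ 0 → |w.1| ≤ K ∧ |w.2.1| ≤ K ∧ |w.2.2.1| ≤ K ∧ |w.2.2.2| ≤ K)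
    (hv : ‖v‖ ≤ 1) (hM : 0 < M) (hℓv : M ≤ |ℓ v|) :
    ‖∫ w, Complex.exp (2 * π * Complex.I * ((ℓ w + θ : ℝ) : ℂ)) * ρ w‖
      ≤ K * volume.real (Metric.closedBall (0 : ℝ × ℝ × ℝ × ℝ) K) / (2 * π * M) := by
  have hts : tsupport ρ ⊆ Metric.closedBall 0 K := closure_minimal
    (fun w hw => mem_closedBall_zero_iff.2 (by simpa [Prod.norm_def] using hsupp w hw))
    Metric.isClosed_closedBall
  have hosc := (mul_norm_integral_cexp_phase_mul_le volume ℓ θ v hρ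
    ((isCompact_closedBall 0 K).of_isClosed_subset (isClosed_tsupport ρ) hts)).trans
    (integral_abs_fderiv_apply_le volume v hts hdρ)
  have hK : 0 ≤ K := (norm_nonneg _).trans (hdρ 0)
  have hV := measureReal_nonneg (μ := volume) (s := Metric.closedBall (0 : ℝ × ℝ × ℝ × ℝ) K)
  rw [le_div_iff₀ (by positivity)]
  calc _ ≤ 2 * π * |ℓ v| * ‖∫ w, Complex.exp (2 * π * Complex.I * ((ℓ w + θ : ℝ) : ℂ)) * ρ w‖ := by
        rw [mul_comm]; gcongr
    _ ≤ K * ‖v‖ * volume.real (Metric.closedBall (0 : ℝ × ℝ × ℝ × ℝ) K) := hosc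
    _ ≤ K * volume.real (Metric.closedBall (0 : ℝ × ℝ × ℝ × ℝ) K) := by
        gcongr; exact mul_le_of_le_one_right hK hv

theorem exp_lt_of_lt_floor_log {A x : ℝ} (hA : 0 ≤ A) (hx : 0 ≤ x) (h : A < ⌊log x⌋) :
    exp A < x := by
  rcases hx.eq_or_lt with rfl | hx
  · simp only [log_zero, Int.floor_zero, Int.cast_zero] at h
    linarith
  calc exp A < exp (log x) := exp_lt_exp.2 (h.trans_le (Int.floor_le _))
    _ = x := exp_log hx

theorem exp_sub_one_mul_le_of_le_abs_floor_log_sub {A a b : ℝ} (ha : 0 < a) (hab : a ≤ b)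
    (h : A ≤ |(⌊log a⌋ : ℝ) - ⌊log b⌋|) : exp (A - 1) * a ≤ b := by
  have hfloor : (⌊log a⌋ : ℝ) ≤ ⌊log b⌋ := by
    exact_mod_cast Int.floor_le_floor (log_le_log ha hab)
  rw [abs_sub_comm, abs_of_nonneg (sub_nonneg.2 hfloor)] at h
  have hlog : A - 1 + log a ≤ log b := by
    linarith [Int.floor_le (log b), Int.sub_one_lt_floor (log a)]
  calc exp (A - 1) * a = exp (A - 1 + log a) := by rw [exp_add, exp_log ha]
    _ ≤ exp (log b) := exp_le_exp.2 hlog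
    _ = b := exp_log (ha.trans_le hab)

theorem floor_log_max {a b : ℝ} (ha : 0 < a) (hb : 0 < b) :
    ⌊log (max a b)⌋ = max ⌊log a⌋ ⌊log b⌋ := by
  rcases le_total a b with h | h
  · rw [max_eq_right h, max_eq_right (Int.floor_le_floor (log_le_log ha h))]
  · rw [max_eq_left h, max_eq_left (Int.floor_le_floor (log_le_log hb h))]

def IsLacunary {ι : Type*} (E R : ℝ) (T : ι → ℝ) : Prop :=
  (∀ j, E < T j) ∧ ∀ i j, i ≠ j → T i ≤ T j → R * T i ≤ T j

theorem isLacunary_of_floor_log {ι : Type*} {A : ℝ} {T : ι → ℝ} (hA : 0 ≤ A)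
    (hT : ∀ j, 0 ≤ T j) (hlow : ∀ j, A < ⌊log (T j)⌋)
    (hsep : ∀ i j, i ≠ j → A ≤ |(⌊log (T i)⌋ : ℝ) - ⌊log (T j)⌋|) :
    IsLacunary (exp A) (exp (A - 1)) T :=
  have hexp j := exp_lt_of_lt_floor_log hA (hT j) (hlow j)
  ⟨hexp, fun i j hij hle =>
    exp_sub_one_mul_le_of_le_abs_floor_log_sub ((exp_pos A).trans (hexp i)) hle (hsep i j hij)⟩

theorem IsSplit.isLacunary {s : ℕ} {A : ℝ} (hA : 0 ≤ A) {x y : Fin s → ℝ}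
    (h : IsSplit A fun j => ((⌊log |x j|⌋ : ℝ), (⌊log |y j|⌋ : ℝ))) :
    IsLacunary (exp A) (exp (A - 1)) (fun j => |x j|) ∧
      IsLacunary (exp A) (exp (A - 1)) (fun j => |y j|) ∧
      IsLacunary (exp A) (exp (A - 1)) (fun j => max |x j| |y j|) := by
  obtain ⟨hlow, hsep⟩ := h
  have hx := isLacunary_of_floor_log hA (fun j => abs_nonneg (x j)) (fun j => (hlow j).1)
    (fun i j hij => (hsep i j hij).1)
  have hy := isLacunary_of_floor_log hA (fun j => abs_nonneg (y j)) (fun j => (hlow j).2)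
    (fun i j hij => (hsep i j hij).2.1)
  have hmax : ∀ j, (⌊log (max |x j| |y j|)⌋ : ℝ) = max (⌊log |x j|⌋ : ℝ) ⌊log |y j|⌋ := by
    intro j
    rw [floor_log_max ((exp_pos A).trans (hx.1 j)) ((exp_pos A).trans (hy.1 j)), Int.cast_max]
  refine ⟨hx, hy, isLacunary_of_floor_log hA (fun j => (abs_nonneg _).trans (le_max_left _ _))
    (fun j => ?_) (fun i j hij => ?_)⟩
  · rw [hmax]; exact (hlow j).1.trans_le (le_max_left _ _)
  · rw [hmax, hmax]; exact (hsep i j hij).2.2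

theorem IsLacunary.exists_lt_abs_sum {ι : Type*} [Fintype ι] {E R : ℝ} {T : ι → ℝ}
    (hT : IsLacunary E R T) (hE : 0 ≤ E) {w : ι → ℤ} (hw : ∃ j, w j ≠ 0)
    (hR : 2 * ∑ j, |(w j : ℝ)| ≤ R) :
    ∃ j₀, ∀ N : ι → ℝ, (∀ j, |N j| ≤ T j) → |N j₀| = T j₀ →
      E / 2 < |∑ j, w j * N j| := by
  classical
  obtain ⟨j₀, hj₀, hmax⟩ := (Finset.univ.filter (w · ≠ 0)).exists_max_image T
    (by simpa [Finset.filter_nonempty_iff] using hw)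
  simp only [Finset.mem_filter, Finset.mem_univ, true_and] at hj₀ hmax
  refine ⟨j₀, fun N hN hN₀ => ?_⟩
  have hwj₀ : (1 : ℝ) ≤ |(w j₀ : ℝ)| := by exact_mod_cast Int.one_le_abs hj₀
  have hsum : (1 : ℝ) ≤ ∑ j, |(w j : ℝ)| :=
    hwj₀.trans (Finset.single_le_sum (f := fun j => |(w j : ℝ)|) (fun j _ => abs_nonneg _)
      (Finset.mem_univ j₀))
  have hRpos : 0 < R := by linarith
  have hTj₀ : 0 ≤ T j₀ := hE.trans (hT.1 j₀).le
  have hsmall : ∀ j ∈ Finset.univ.erase j₀, |(w j : ℝ) * N j| ≤ |(w j : ℝ)| * (T j₀ / R) := by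
    intro j hj
    by_cases hwj : w j = 0
    · simp [hwj]
    rw [abs_mul]
    refine mul_le_mul_of_nonneg_left ((hN j).trans ?_) (abs_nonneg _)
    rw [le_div_iff₀' hRpos]
    exact hT.2 j j₀ (Finset.ne_of_mem_erase hj) (hmax j hwj)
  have hrest : |∑ j ∈ Finset.univ.erase j₀, (w j : ℝ) * N j| ≤ T j₀ / 2 :=
    calc |∑ j ∈ Finset.univ.erase j₀, (w j : ℝ) * N j|
        ≤ ∑ j ∈ Finset.univ.erase j₀, |(w j : ℝ)| * (T j₀ / R) :=
          (Finset.abs_sum_le_sum_abs _ _).trans (Finset.sum_le_sum hsmall)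
      _ ≤ (∑ j, |(w j : ℝ)|) * (T j₀ / R) := by
          rw [← Finset.sum_mul]
          gcongr
          exact Finset.erase_subset _ _
      _ ≤ R / 2 * (T j₀ / R) := by gcongr; linarith
      _ = T j₀ / 2 := by field_simp
  have hlead : T j₀ ≤ |(w j₀ : ℝ) * N j₀| := by
    rw [abs_mul, hN₀]
    exact le_mul_of_one_le_left hTj₀ hwj₀
  rw [← Finset.add_sum_erase _ _ (Finset.mem_univ j₀)]
  have := abs_sub_abs_le_abs_add ((w j₀ : ℝ) * N j₀) (∑ j ∈ Finset.univ.erase j₀, w j * N j)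
  linarith [hT.1 j₀]

theorem one_sub_two_mul_max_abs_le {a₁ b₁ a₂ b₂ η : ℝ} (ha₁ : |a₁ - 1| ≤ η) (ha₂ : |a₂| ≤ η)
    (hb₁ : |b₁| ≤ η) (hb₂ : |b₂ - 1| ≤ η) (x y : ℝ) :
    (1 - 2 * η) * max |x| |y| ≤ max |b₂ * x - b₁ * y| |a₁ * y - a₂ * x| := by
  have hη : 0 ≤ η := (abs_nonneg _).trans ha₂
  rcases le_total |y| |x| with h | h
  · rw [max_eq_left h]
    refine le_max_of_le_left ?_
    have hx := abs_add_three (b₂ * x - b₁ * y) (-((b₂ - 1) * x)) (b₁ * y)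
    rw [show b₂ * x - b₁ * y + -((b₂ - 1) * x) + b₁ * y = x by ring, abs_neg, abs_mul,
      abs_mul] at hx
    have h₁ : |b₂ - 1| * |x| ≤ η * |x| := mul_le_mul_of_nonneg_right hb₂ (abs_nonneg _)
    have h₂ : |b₁| * |y| ≤ η * |x| := mul_le_mul hb₁ h (abs_nonneg _) hη
    linarith
  · rw [max_eq_right h]
    refine le_max_of_le_right ?_
    have hy := abs_add_three (a₁ * y - a₂ * x) (-((a₁ - 1) * y)) (a₂ * x)
    rw [show a₁ * y - a₂ * x + -((a₁ - 1) * y) + a₂ * x = y by ring, abs_neg, abs_mul,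
      abs_mul] at hy
    have h₁ : |a₁ - 1| * |y| ≤ η * |y| := mul_le_mul_of_nonneg_right ha₁ (abs_nonneg _)
    have h₂ : |a₂| * |x| ≤ η * |y| := mul_le_mul ha₂ h (abs_nonneg _) hη
    linarith

theorem exists_large_frequency {ι : Type*} [Fintype ι] {E R η a₁ b₁ a₂ b₂ : ℝ}
    {N₁ N₂ p q : ι → ℝ} (m : ι → Fin 3 → ℤ) (hm : ∃ j c, m j c ≠ 0) (hE : 0 ≤ E)
    (hR : 2 * ∑ j, ∑ c, |(m j c : ℝ)| ≤ R) (h₁ : IsLacunary E R fun j => |N₁ j|)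
    (h₂ : IsLacunary E R fun j => |N₂ j|) (h₁₂ : IsLacunary E R fun j => max |N₁ j| |N₂ j|)
    (hη : η ≤ 1 / 4) (ha₁ : |a₁ - 1| ≤ η) (ha₂ : |a₂| ≤ η) (hb₁ : |b₁| ≤ η)
    (hb₂ : |b₂ - 1| ≤ η) (hp : ∀ j, p j = b₂ * N₁ j - b₁ * N₂ j)
    (hq : ∀ j, q j = a₁ * N₂ j - a₂ * N₁ j) :
    E / 4 ≤ |∑ j, m j 0 * N₁ j| ∨ E / 4 ≤ |∑ j, m j 1 * N₂ j| ∨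
      E / 4 ≤ |∑ j, m j 2 * p j| ∨ E / 4 ≤ |∑ j, m j 2 * q j| := by
  have hRc : ∀ c, 2 * ∑ j, |(m j c : ℝ)| ≤ R := by
    refine fun c => le_trans ?_ hR
    gcongr with j
    exact Finset.single_le_sum (f := fun c => |(m j c : ℝ)|) (fun c _ => abs_nonneg _)
      (Finset.mem_univ c)
  obtain ⟨j, c, hc⟩ := hm
  fin_cases c
  · obtain ⟨j₀, hj₀⟩ := h₁.exists_lt_abs_sum hE ⟨j, hc⟩ (hRc 0)
    have := hj₀ N₁ (fun _ => le_rfl) rfl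
    left; linarith
  · obtain ⟨j₀, hj₀⟩ := h₂.exists_lt_abs_sum hE ⟨j, hc⟩ (hRc 1)
    have := hj₀ N₂ (fun _ => le_rfl) rfl
    right; left; linarith
  · obtain ⟨j₀, hj₀⟩ := h₁₂.exists_lt_abs_sum hE ⟨j, hc⟩ (hRc 2)
    set P₁ := ∑ j, (m j 2 : ℝ) * N₁ j
    set P₂ := ∑ j, (m j 2 : ℝ) * N₂ j
    have hP : E / 2 < max |P₁| |P₂| := by
      rcases le_total |N₂ j₀| |N₁ j₀| with h | h
      · exact lt_max_of_lt_left (hj₀ N₁ (fun _ => le_max_left _ _) (max_eq_left h).symm)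
      · exact lt_max_of_lt_right (hj₀ N₂ (fun _ => le_max_right _ _) (max_eq_right h).symm)
    have hsum_p : ∑ j, (m j 2 : ℝ) * p j = b₂ * P₁ - b₁ * P₂ := by
      simp only [P₁, P₂, hp, Finset.mul_sum, ← Finset.sum_sub_distrib]
      exact Finset.sum_congr rfl fun j _ => by ring
    have hsum_q : ∑ j, (m j 2 : ℝ) * q j = a₁ * P₂ - a₂ * P₁ := by
      simp only [P₁, P₂, hq, Finset.mul_sum, ← Finset.sum_sub_distrib]
      exact Finset.sum_congr rfl fun j _ => by ring
    have hbig : E / 4 ≤ max |b₂ * P₁ - b₁ * P₂| |a₁ * P₂ - a₂ * P₁| := by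
      nlinarith [one_sub_two_mul_max_abs_le ha₁ ha₂ hb₁ hb₂ P₁ P₂, le_max_left |P₁| |P₂|,
        abs_nonneg P₁]
    rw [← hsum_p, ← hsum_q, le_max_iff] at hbig
    right; right; exact hbig

theorem equidistribution_under_splitness_general (s : ℕ) (K : ℝ)
    (m : Fin s → Fin 3 → ℤ) (hm : ∃ j c, m j c ≠ 0) :
    ∃ η₀ > (0 : ℝ), ∀ η : ℝ, 0 < η → η < η₀ →
    ∀ ε' : ℝ, 0 < ε' → ∃ A₀ : ℝ, 0 < A₀ ∧ ∀ A : ℝ, A₀ ≤ A →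
    ∀ a₁ b₁ a₂ b₂ : ℝ, a₁ * b₂ - b₁ * a₂ = 1 →
      |a₁ - 1| < η → |b₂ - 1| < η → |a₂| < η → |b₁| < η →
    ∀ k l : Fin s → ℤ,
      IsSplit A (fun j => (((⌊Real.log |a₁ * k j + b₁ * l j|⌋ : ℤ) : ℝ),
        ((⌊Real.log |a₂ * k j + b₂ * l j|⌋ : ℤ) : ℝ))) →
    ∀ φ : Fin s → ℝ,
    ∀ ρ : ℝ × ℝ × ℝ × ℝ → ℝ, ContDiff ℝ 1 ρ →
      (∀ w, |ρ w| ≤ K) → (∀ w, ‖fderiv ℝ ρ w‖ ≤ K) →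
      (∀ w, ρ w ≠ 0 →
        |w.1| ≤ K ∧ |w.2.1| ≤ K ∧ |w.2.2.1| ≤ K ∧ |w.2.2.2| ≤ K) →
      (∀ w, 0 ≤ ρ w) → (∫ w : ℝ × ℝ × ℝ × ℝ, ρ w = 1) →
      ‖∫ w : ℝ × ℝ × ℝ × ℝ,
          (∏ j, Complex.exp (2 * π * Complex.I *
            ((m j 0 * ((a₁ * k j + b₁ * l j) * w.1)
              + m j 1 * ((a₂ * k j + b₂ * l j) * w.2.1)
              + m j 2 * (k j * w.2.2.1 + l j * w.2.2.2 + φ j) : ℝ) : ℂ)))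
            * (ρ w : ℂ)‖ ≤ ε' := by
  set V := (volume : Measure (ℝ × ℝ × ℝ × ℝ)).real (Metric.closedBall 0 K)
  refine ⟨1 / 4, by norm_num, fun η _ hη ε' hε' =>
    ⟨max 1 (max (log (2 * ∑ j, ∑ c, |(m j c : ℝ)|) + 1) (log (2 * K * V / (π * ε')))),
      lt_max_of_lt_left one_pos, ?_⟩⟩
  intro A hA a₁ b₁ a₂ b₂ hdet ha₁ hb₂ ha₂ hb₁ k l hsplit φ ρ hρ _ hdρ hsupp _ _
  obtain ⟨hA₁, hAQ, hAε⟩ : 1 ≤ A ∧ _ ∧ _ := by simpa only [max_le_iff] using hA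
  have hR := (le_exp_log _).trans (exp_le_exp.2 (le_sub_iff_add_le.2 hAQ))
  obtain ⟨h₁, h₂, h₁₂⟩ := hsplit.isLacunary (by linarith)
  obtain ⟨v, hv, hℓv⟩ := exists_norm_le_one_le_abs_coordForm <|
    exists_large_frequency m hm (exp_pos A).le hR h₁ h₂ h₁₂ hη.le ha₁.le ha₂.le hb₁.le hb₂.le
      (fun j => by linear_combination (-(k j : ℝ)) * hdet)
      (fun j => by linear_combination (-(l j : ℝ)) * hdet)
  simp only [prod_cexp_phase_eq m (fun j => a₁ * k j + b₁ * l j) (fun j => a₂ * k j + b₂ * l j)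
    (fun j => k j) (fun j => l j) φ]
  refine (norm_integral_cexp_phase_mul_le_of_le_abs _ _ hρ hdρ hsupp hv (by positivity)
    hℓv).trans ?_
  have hKV := (le_exp_log _).trans (exp_le_exp.2 hAε)
  rw [div_le_iff₀ (by positivity)] at hKV ⊢
  linarith

/-- **Equidistribution under splitness (oscillatory-integral bound).** Fix `s ≥ 1`, `K > 0`
and integers `m_{j,c}`, not all zero. For every `ε' > 0` there is `A₀ > 0` such that for
every `A ≥ A₀`, every matrix `(a₁,b₁;a₂,b₂) ∈ G_η`, all integers `(k_j,l_j)` whose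
associated points `t⁽ʲ⁾ = (⌊ln|a₁k_j+b₁l_j|⌋, ⌊ln|a₂k_j+b₂l_j|⌋)` form an `A`-split family,
all phases `φ_j`, and every `C¹` probability density `ρ` on `ℝ⁴` supported in `[-K,K]⁴`
with `C¹`-norm at most `K`, the corresponding exponential-sum integral has modulus `≤ ε'`.
Consequently the joint distribution of the fractional parts
`({(a₁k_j+b₁l_j)u}, {(a₂k_j+b₂l_j)v}, {k_j x+l_j y+φ_j})_j` converges to the uniform
distribution on `𝕋^{3s}`, uniformly in the data. -/
theorem equidistribution_under_splitness (s : ℕ) (hs : 1 ≤ s) (K : ℝ) (hK : 0 < K)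
    (m : Fin s → Fin 3 → ℤ) (hm : ∃ j c, m j c ≠ 0) :
    ∃ η₀ > (0 : ℝ), ∀ η : ℝ, 0 < η → η < η₀ →
    ∀ ε' : ℝ, 0 < ε' → ∃ A₀ : ℝ, 0 < A₀ ∧ ∀ A : ℝ, A₀ ≤ A →
    ∀ a₁ b₁ a₂ b₂ : ℝ, a₁ * b₂ - b₁ * a₂ = 1 →
      |a₁ - 1| < η → |b₂ - 1| < η → |a₂| < η → |b₁| < η →
    ∀ k l : Fin s → ℤ,
      IsSplit A (fun j => (((⌊Real.log |a₁ * k j + b₁ * l j|⌋ : ℤ) : ℝ),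
        ((⌊Real.log |a₂ * k j + b₂ * l j|⌋ : ℤ) : ℝ))) →
    ∀ φ : Fin s → ℝ,
    ∀ ρ : ℝ × ℝ × ℝ × ℝ → ℝ, ContDiff ℝ 1 ρ →
      (∀ w, |ρ w| ≤ K) → (∀ w, ‖fderiv ℝ ρ w‖ ≤ K) →
      (∀ w, ρ w ≠ 0 →
        |w.1| ≤ K ∧ |w.2.1| ≤ K ∧ |w.2.2.1| ≤ K ∧ |w.2.2.2| ≤ K) →
      (∀ w, 0 ≤ ρ w) → (∫ w : ℝ × ℝ × ℝ × ℝ, ρ w = 1) →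
      ‖∫ w : ℝ × ℝ × ℝ × ℝ,
          (∏ j, Complex.exp (2 * π * Complex.I *
            ((m j 0 * ((a₁ * k j + b₁ * l j) * w.1)
              + m j 1 * ((a₂ * k j + b₂ * l j) * w.2.1)
              + m j 2 * (k j * w.2.2.1 + l j * w.2.2.2 + φ j) : ℝ) : ℂ)))
            * (ρ w : ℂ)‖ ≤ ε' :=
  equidistribution_under_splitness_general s K m hm

end
end

section
/- (Counting frequencies in a dyadic product range.) For η > 0 sufficiently small there is a constant C = C(d,η) such that for every integer N ≥ 3, every integer s ≥ 0, and every A ∈ G_η: #{k ∈ ℤ^d : |k_i| ≤ N for all i, |k̄_i| ≥ 1 for all i, and 2^s N ≤ ∏_i |k̄_i| ≤ 2^{s+1} N} ≤ C · 2^s · N · (ln N + s)^{d−1}. -/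
open MeasureTheory Real Filter

noncomputable section

/-- `SL(d, ℝ)`. -/
abbrev SLR (d : ℕ) := Matrix.SpecialLinearGroup (Fin d) ℝ

/-- The set `G_η` of matrices in `SL(d,ℝ)` whose entries are `η`-close to the identity. -/
def Gset (d : ℕ) (η : ℝ) : Set (SLR d) :=
  {A | (∀ i, |A.1 i i - 1| < η) ∧ ∀ i j, i ≠ j → |A.1 i j| < η}

/-- The dual coordinates `k̄_i = Σ_j a_{ij} k_j`. -/
def kbar (d : ℕ) (A : SLR d) (k : Fin d → ℤ) (i : Fin d) : ℝ :=
  ∑ j, A.1 i j * (k j : ℝ)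

/-- `k·α = Σ_i k_i α_i`. -/
def dotP (d : ℕ) (k : Fin d → ℤ) (α : Fin d → ℝ) : ℝ := ∑ i, (k i : ℝ) * α i

/-- The Fourier term `U_k(ξ,N)` of the discrepancy. -/
def Uk (d : ℕ) (A : SLR d) (u α x : Fin d → ℝ) (N : ℕ) (k : Fin d → ℤ) : ℝ :=
  (π ^ d)⁻¹ * (∏ i, Real.sin (2 * π * kbar d A k i * u i) / kbar d A k i) *
    (Real.sin (π * N * dotP d k α) / Real.sin (π * dotP d k α)) *
    Real.cos (2 * π * dotP d k x + π * (N + 1) * dotP d k α)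

/-- The fundamental domain `[0,1)^d` of the torus `𝕋^d`. -/
def cube (d : ℕ) : Set (Fin d → ℝ) := Set.univ.pi fun _ => Set.Ico (0 : ℝ) 1

/-!
Write `n = ⌊k̄⌋` coordinatewise. Since `A` is close to the identity, `‖x‖ ≤ 2 ‖A x‖` in the
sup norm, so two frequencies with the same `n` differ by at most one in each coordinate and
`k ↦ n` is at most `3^d`-to-one. Its image consists of integer vectors with nonzero entries and
`∏ |n_i| ≤ 2^d · 2^(s+1) N =: Q`; up to `2^d` choices of signs these are tuples of positive
integers with product at most `Q`, and there are at most `Q (1 + log Q)^(d-1)` of those, by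
induction on `d`: fixing the first entry `a` leaves the bound `Q / a`, and
`∑_{a ≤ Q} 1/a ≤ 1 + log Q`. Finally `1 + log Q ≤ (d + 3)(log N + s)`.
-/

open Finset Matrix

section MatrixNearIdentity

variable {m n : Type*} [Fintype m] [Fintype n]

lemma norm_mulVec_le_of_abs_le {M : Matrix m n ℝ} {η : ℝ} (hη : 0 ≤ η)
    (hM : ∀ i j, |M i j| ≤ η) (x : n → ℝ) :
    ‖M *ᵥ x‖ ≤ Fintype.card n * η * ‖x‖ := by
  refine (pi_norm_le_iff_of_nonneg (by positivity)).2 fun i => ?_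
  calc ‖(M *ᵥ x) i‖ = |∑ j, M i j * x j| := rfl
    _ ≤ ∑ j, |M i j * x j| := abs_sum_le_sum_abs _ _
    _ ≤ ∑ _j : n, η * ‖x‖ := sum_le_sum fun j _ => by
      rw [abs_mul]
      exact mul_le_mul (hM i j) (norm_le_pi_norm x j) (abs_nonneg _) hη
    _ = Fintype.card n * η * ‖x‖ := by simp [mul_assoc]

lemma norm_le_two_mul_norm_mulVec [DecidableEq n] {M : Matrix n n ℝ} {η : ℝ} (hη : 0 ≤ η)
    (hM : ∀ i j, |(M - 1) i j| ≤ η) (hnη : Fintype.card n * η ≤ 1 / 2) (x : n → ℝ) :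
    ‖x‖ ≤ 2 * ‖M *ᵥ x‖ := by
  have hpert := norm_mulVec_le_of_abs_le hη hM x
  have hx : x = M *ᵥ x - (M - 1) *ᵥ x := by simp [sub_mulVec]
  have htri := norm_sub_le (M *ᵥ x) ((M - 1) *ᵥ x)
  rw [← hx] at htri
  nlinarith [norm_nonneg x]

lemma abs_sub_le_one_of_floor_mulVec_eq [DecidableEq n] {M : Matrix n n ℝ} {η : ℝ}
    (hη : 0 ≤ η) (hM : ∀ i j, |(M - 1) i j| ≤ η) (hnη : Fintype.card n * η ≤ 1 / 2)
    {k k' : n → ℤ} (h : ∀ i, ⌊(M *ᵥ fun j => (k j : ℝ)) i⌋ = ⌊(M *ᵥ fun j => (k' j : ℝ)) i⌋)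
    (j : n) : |k j - k' j| ≤ 1 := by
  set v : n → ℝ := fun j => ((k j - k' j : ℤ) : ℝ)
  have himage : ‖M *ᵥ v‖ < 1 := by
    refine (pi_norm_lt_iff one_pos).2 fun i => ?_
    have hv : v = (fun j => (k j : ℝ)) - fun j => (k' j : ℝ) := by
      ext j; simp [v]
    rw [hv, mulVec_sub, Real.norm_eq_abs]
    exact Int.abs_sub_lt_one_of_floor_eq_floor (h i)
  have hv : |v j| < 2 := by
    have := norm_le_pi_norm v j
    have := norm_le_two_mul_norm_mulVec hη hM hnη v
    rw [Real.norm_eq_abs] at *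
    linarith
  have hcast : ((|k j - k' j| : ℤ) : ℝ) < 2 := by rwa [Int.cast_abs]
  have hlt : |k j - k' j| < 2 := by exact_mod_cast hcast
  omega

lemma card_le_three_pow_mul_card_image_floor_mulVec [DecidableEq n] {M : Matrix n n ℝ} {η : ℝ}
    (hη : 0 ≤ η) (hM : ∀ i j, |(M - 1) i j| ≤ η) (hnη : Fintype.card n * η ≤ 1 / 2)
    (S : Finset (n → ℤ)) :
    #S ≤ 3 ^ Fintype.card n * #(S.image fun k i => ⌊(M *ᵥ fun j => (k j : ℝ)) i⌋) := by
  refine card_le_mul_card_image S _ fun b _ => ?_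
  rcases (S.filter fun k => (fun i => ⌊(M *ᵥ fun j => (k j : ℝ)) i⌋) = b).eq_empty_or_nonempty
    with hempty | ⟨k₀, hk₀⟩
  · simp [hempty]
  calc _ ≤ #(Fintype.piFinset fun _ : n => Icc (-1 : ℤ) 1) := by
        refine card_le_card_of_injOn (fun k => k - k₀) (fun k hk => ?_) sub_left_injective.injOn
        rw [mem_coe, mem_filter] at hk
        rw [mem_filter] at hk₀
        have hfloor := congrFun (hk.2.trans hk₀.2.symm)
        rw [mem_coe, Fintype.mem_piFinset]
        exact fun i =>
          mem_Icc.2 <| abs_le.1 (abs_sub_le_one_of_floor_mulVec_eq hη hM hnη hfloor i)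
    _ = 3 ^ Fintype.card n := by simp

end MatrixNearIdentity

lemma Int.floor_ne_zero_of_one_le_abs {x : ℝ} (hx : 1 ≤ |x|) : ⌊x⌋ ≠ 0 := by
  rcases le_abs'.1 hx with hneg | hpos
  · exact (Int.floor_le_neg_one_iff.2 (by linarith)).trans_lt (by norm_num) |>.ne
  · exact (Int.floor_pos.2 hpos).ne'

lemma Int.abs_floor_le_two_mul_abs {x : ℝ} (hx : 1 ≤ |x|) : |(⌊x⌋ : ℝ)| ≤ 2 * |x| := by
  have hfloor : |(⌊x⌋ : ℝ) - x| ≤ 1 := by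
    rw [abs_sub_comm]
    exact (Int.abs_sub_lt_one_of_floor_eq_floor (Int.floor_intCast ⌊x⌋).symm).le
  linarith [abs_sub_abs_le_abs_sub (⌊x⌋ : ℝ) x]

open scoped Classical in
/-- The entry bound `⌊Q⌋₊` follows from the product bound; it only makes the set a `Finset`. -/
def tuplesWithProdLE (d : ℕ) (Q : ℝ) : Finset (Fin d → ℕ) :=
  (Fintype.piFinset fun _ => Icc 1 ⌊Q⌋₊).filter fun m => ∏ i, (m i : ℝ) ≤ Q

lemma mem_tuplesWithProdLE {d : ℕ} {Q : ℝ} {m : Fin d → ℕ} :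
    m ∈ tuplesWithProdLE d Q ↔ (∀ i, 1 ≤ m i) ∧ ∏ i, (m i : ℝ) ≤ Q := by
  simp only [tuplesWithProdLE, mem_filter, Fintype.mem_piFinset, mem_Icc, forall_and]
  refine ⟨fun h => ⟨h.1.1, h.2⟩, fun ⟨hpos, hprod⟩ => ⟨⟨hpos, fun i => ?_⟩, hprod⟩⟩
  refine Nat.le_floor ?_
  calc (m i : ℝ) ≤ ((∏ j, m j : ℕ) : ℝ) := by
        exact_mod_cast single_le_prod' (fun j _ => hpos j) (mem_univ i)
    _ ≤ Q := by push_cast; exact hprod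

lemma card_filter_apply_zero_tuplesWithProdLE_le (e : ℕ) (Q : ℝ) {a : ℕ} (ha : 1 ≤ a) :
    #{m ∈ tuplesWithProdLE (e + 1) Q | m 0 = a} ≤ #(tuplesWithProdLE e (Q / a)) := by
  have ha0 : (0 : ℝ) < a := by exact_mod_cast ha
  refine card_le_card_of_injOn Fin.tail (fun m hm => ?_) fun m hm m' hm' htail => ?_
  · rw [mem_coe, mem_filter, mem_tuplesWithProdLE, Fin.prod_univ_succ] at hm
    obtain ⟨⟨hpos, hprod⟩, rfl⟩ := hm
    rw [mem_coe, mem_tuplesWithProdLE, le_div_iff₀ ha0, mul_comm]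
    exact ⟨fun i => hpos i.succ, hprod⟩
  · rw [mem_coe, mem_filter] at hm hm'
    rw [← Fin.cons_self_tail m, ← Fin.cons_self_tail m', hm.2, hm'.2, htail]

lemma sum_Icc_floor_inv_le_one_add_log {Q : ℝ} (hQ : 1 ≤ Q) :
    ∑ a ∈ Icc 1 ⌊Q⌋₊, (a : ℝ)⁻¹ ≤ 1 + Real.log Q := by
  have hharmonic : ∑ a ∈ Icc 1 ⌊Q⌋₊, (a : ℝ)⁻¹ = harmonic ⌊Q⌋₊ := by
    rw [harmonic_eq_sum_Icc]; push_cast; rfl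
  have hlog : Real.log ⌊Q⌋₊ ≤ Real.log Q :=
    Real.log_le_log (by exact_mod_cast Nat.floor_pos.2 hQ) (Nat.floor_le (by linarith))
  rw [hharmonic]
  linarith [harmonic_le_one_add_log ⌊Q⌋₊]

lemma card_tuplesWithProdLE_succ_le (e : ℕ) {Q : ℝ} (hQ : 1 ≤ Q) :
    (#(tuplesWithProdLE (e + 1) Q) : ℝ) ≤ Q * (1 + Real.log Q) ^ e := by
  induction e generalizing Q with
  | zero =>
    calc (#(tuplesWithProdLE 1 Q) : ℝ)
        ≤ #(Fintype.piFinset fun _ : Fin 1 => Icc 1 ⌊Q⌋₊) := by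
          exact_mod_cast card_filter_le _ _
      _ ≤ Q := by simpa using Nat.floor_le (by linarith)
      _ = Q * (1 + Real.log Q) ^ 0 := by ring
  | succ e ih =>
    have hlogQ : 0 ≤ 1 + Real.log Q := by linarith [Real.log_nonneg hQ]
    have hfiber : ∀ a ∈ Icc 1 ⌊Q⌋₊, (#{m ∈ tuplesWithProdLE (e + 2) Q | m 0 = a} : ℝ) ≤
        Q * (1 + Real.log Q) ^ e * (a : ℝ)⁻¹ := fun a ha => by
      rw [mem_Icc] at ha
      have ha0 : (0 : ℝ) < a := by exact_mod_cast ha.1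
      have hQa : 1 ≤ Q / a :=
        (one_le_div ha0).2 <| (Nat.cast_le.2 ha.2).trans (Nat.floor_le (by linarith))
      have hlog : Real.log (Q / a) ≤ Real.log Q :=
        Real.log_le_log (by linarith) (div_le_self (by linarith) (by exact_mod_cast ha.1))
      calc (#{m ∈ tuplesWithProdLE (e + 2) Q | m 0 = a} : ℝ)
          ≤ #(tuplesWithProdLE (e + 1) (Q / a)) := by
            exact_mod_cast card_filter_apply_zero_tuplesWithProdLE_le (e + 1) Q ha.1
        _ ≤ Q / a * (1 + Real.log (Q / a)) ^ e := ih hQa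
        _ ≤ Q / a * (1 + Real.log Q) ^ e := by
            gcongr
            linarith [Real.log_nonneg hQa]
        _ = Q * (1 + Real.log Q) ^ e * (a : ℝ)⁻¹ := by ring
    have hmaps : ∀ m ∈ tuplesWithProdLE (e + 2) Q, m 0 ∈ Icc 1 ⌊Q⌋₊ := fun m hm =>
      (Fintype.mem_piFinset.1 (mem_filter.1 hm).1) 0
    calc (#(tuplesWithProdLE (e + 2) Q) : ℝ)
        = ∑ a ∈ Icc 1 ⌊Q⌋₊, (#{m ∈ tuplesWithProdLE (e + 2) Q | m 0 = a} : ℝ) := by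
          exact_mod_cast card_eq_sum_card_fiberwise hmaps
      _ ≤ ∑ a ∈ Icc 1 ⌊Q⌋₊, Q * (1 + Real.log Q) ^ e * (a : ℝ)⁻¹ := sum_le_sum hfiber
      _ = Q * (1 + Real.log Q) ^ e * ∑ a ∈ Icc 1 ⌊Q⌋₊, (a : ℝ)⁻¹ := by rw [mul_sum]
      _ ≤ Q * (1 + Real.log Q) ^ e * (1 + Real.log Q) := by
          gcongr
          exact sum_Icc_floor_inv_le_one_add_log hQ
      _ = Q * (1 + Real.log Q) ^ (e + 1) := by ring

lemma card_tuplesWithProdLE_le (d : ℕ) {Q : ℝ} (hQ : 1 ≤ Q) :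
    (#(tuplesWithProdLE d Q) : ℝ) ≤ Q * (1 + Real.log Q) ^ (d - 1) := by
  cases d with
  | zero =>
    calc (#(tuplesWithProdLE 0 Q) : ℝ) ≤ Fintype.card (Fin 0 → ℕ) := by
          exact_mod_cast card_le_univ _
      _ ≤ Q * (1 + Real.log Q) ^ (0 - 1) := by simpa using hQ
  | succ e => exact card_tuplesWithProdLE_succ_le e hQ

lemma card_le_two_pow_mul_card_tuplesWithProdLE {d : ℕ} {Q : ℝ} (T : Finset (Fin d → ℤ))
    (hT : ∀ n ∈ T, (∀ i, n i ≠ 0) ∧ ∏ i, |(n i : ℝ)| ≤ Q) :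
    #T ≤ 2 ^ d * #(tuplesWithProdLE d Q) := by
  classical
  let signs : Finset (Fin d → ℤ) := Fintype.piFinset fun _ => {-1, 1}
  calc #T
      ≤ #((signs ×ˢ tuplesWithProdLE d Q).image fun p i => p.1 i * (p.2 i : ℤ)) := by
        refine card_le_card fun n hn => mem_image.2 ?_
        obtain ⟨hne, hprod⟩ := hT n hn
        refine ⟨(fun i => (n i).sign, fun i => (n i).natAbs), mem_product.2 ⟨?_, ?_⟩,
          funext fun i => Int.sign_mul_natAbs (n i)⟩
        · refine Fintype.mem_piFinset.2 fun i => ?_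
          rcases Int.sign_trichotomy (n i) with h | h | h <;> simp_all
        · refine mem_tuplesWithProdLE.2 ⟨fun i => Int.natAbs_pos.2 (hne i), ?_⟩
          simpa only [Nat.cast_natAbs, Int.cast_abs] using hprod
    _ ≤ #(signs ×ˢ tuplesWithProdLE d Q) := card_image_le
    _ = 2 ^ d * #(tuplesWithProdLE d Q) := by simp [signs, card_product]

lemma card_le_of_one_le_abs_mulVec {d : ℕ} {M : Matrix (Fin d) (Fin d) ℝ} {η B : ℝ}
    (hη : 0 ≤ η) (hM : ∀ i j, |(M - 1) i j| ≤ η) (hdη : d * η ≤ 1 / 2) (hB : 1 ≤ B)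
    (S : Finset (Fin d → ℤ))
    (hS : ∀ k ∈ S, (∀ i, 1 ≤ |(M *ᵥ fun j => (k j : ℝ)) i|) ∧
      ∏ i, |(M *ᵥ fun j => (k j : ℝ)) i| ≤ B) :
    (#S : ℝ) ≤ 6 ^ d * (2 ^ d * B) * (1 + Real.log (2 ^ d * B)) ^ (d - 1) := by
  set T := S.image fun k i => ⌊(M *ᵥ fun j => (k j : ℝ)) i⌋
  have hST : #S ≤ 3 ^ d * #T := by
    simpa using card_le_three_pow_mul_card_image_floor_mulVec hη hM (by simpa using hdη) S
  have hT : ∀ n ∈ T, (∀ i, n i ≠ 0) ∧ ∏ i, |(n i : ℝ)| ≤ 2 ^ d * B := by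
    simp only [T, mem_image, forall_exists_index, and_imp]
    rintro _ k hk rfl
    obtain ⟨hone, hprod⟩ := hS k hk
    refine ⟨fun i => Int.floor_ne_zero_of_one_le_abs (hone i), ?_⟩
    calc ∏ i, |(⌊(M *ᵥ fun j => (k j : ℝ)) i⌋ : ℝ)|
        ≤ ∏ i, 2 * |(M *ᵥ fun j => (k j : ℝ)) i| :=
          prod_le_prod (fun _ _ => abs_nonneg _) fun i _ => Int.abs_floor_le_two_mul_abs (hone i)
      _ ≤ 2 ^ d * B := by
          rw [prod_mul_distrib, prod_const, card_univ, Fintype.card_fin]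
          gcongr
  have hTQ := card_le_two_pow_mul_card_tuplesWithProdLE T hT
  have hQ := card_tuplesWithProdLE_le d
    (one_le_mul_of_one_le_of_one_le (one_le_pow₀ (M₀ := ℝ) (n := d) one_le_two) hB)
  calc (#S : ℝ) ≤ 3 ^ d * (2 ^ d * #(tuplesWithProdLE d (2 ^ d * B))) := by
        exact_mod_cast hST.trans (Nat.mul_le_mul_left _ hTQ)
    _ ≤ 3 ^ d * (2 ^ d * ((2 ^ d * B) * (1 + Real.log (2 ^ d * B)) ^ (d - 1))) := by gcongr
    _ = 6 ^ d * (2 ^ d * B) * (1 + Real.log (2 ^ d * B)) ^ (d - 1) := by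
        rw [show (6 : ℝ) = 3 * 2 by norm_num, mul_pow]; ring

lemma ncard_le_of_one_le_abs_mulVec {d : ℕ} {M : Matrix (Fin d) (Fin d) ℝ} {η B : ℝ}
    (hη : 0 ≤ η) (hM : ∀ i j, |(M - 1) i j| ≤ η) (hdη : d * η ≤ 1 / 2) (hB : 1 ≤ B)
    (K : Set (Fin d → ℤ))
    (hK : ∀ k ∈ K, (∀ i, 1 ≤ |(M *ᵥ fun j => (k j : ℝ)) i|) ∧
      ∏ i, |(M *ᵥ fun j => (k j : ℝ)) i| ≤ B) :
    (K.ncard : ℝ) ≤ 6 ^ d * (2 ^ d * B) * (1 + Real.log (2 ^ d * B)) ^ (d - 1) := by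
  rcases K.finite_or_infinite with hfin | hinf
  · rw [Set.ncard_eq_toFinset_card _ hfin]
    exact card_le_of_one_le_abs_mulVec hη hM hdη hB _ fun k hk => hK k (hfin.mem_toFinset.1 hk)
  · have hlog : 0 ≤ Real.log (2 ^ d * B) :=
      Real.log_nonneg (one_le_mul_of_one_le_of_one_le (one_le_pow₀ one_le_two) hB)
    rw [hinf.ncard, Nat.cast_zero]
    positivity

lemma abs_sub_one_apply_lt_of_mem_Gset {d : ℕ} {η : ℝ} {A : SLR d} (hA : A ∈ Gset d η)
    (i j : Fin d) : |((A : Matrix (Fin d) (Fin d) ℝ) - 1) i j| < η := by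
  rcases eq_or_ne i j with rfl | hij
  · simpa using hA.1 i
  · simpa [Matrix.one_apply_ne hij] using hA.2 i j hij

lemma one_add_log_two_pow_mul_le {N : ℝ} (hN : 3 ≤ N) (d s : ℕ) :
    1 + Real.log (2 ^ d * (2 ^ (s + 1) * N)) ≤ (d + 3) * (Real.log N + s) := by
  have hlog2 : Real.log 2 ≤ 1 := by linarith [Real.log_two_lt_d9]
  have hlogN : 1 ≤ Real.log N := by
    rw [Real.le_log_iff_exp_le (by linarith)]
    linarith [Real.exp_one_lt_d9]
  rw [← mul_assoc, ← pow_add, Real.log_mul (by positivity) (by positivity), Real.log_pow]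
  push_cast
  have : ((d : ℝ) + (s + 1)) * Real.log 2 ≤ d + (s + 1) :=
    mul_le_of_le_one_right (by positivity) hlog2
  nlinarith [mul_le_mul_of_nonneg_left hlogN (by positivity : (0 : ℝ) ≤ d + 2)]

theorem dyadic_frequency_count_general (d : ℕ) :
    ∃ η₀ > (0 : ℝ), ∀ η : ℝ, 0 < η → η < η₀ →
    ∃ C : ℝ, ∀ N : ℕ, 3 ≤ N → ∀ s : ℕ, ∀ A : SLR d, A ∈ Gset d η →
      (Set.ncard {k : Fin d → ℤ | (∀ i, |k i| ≤ (N : ℤ)) ∧ (∀ i, 1 ≤ |kbar d A k i|) ∧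
          2 ^ s * (N : ℝ) ≤ ∏ i, |kbar d A k i| ∧
          ∏ i, |kbar d A k i| ≤ 2 ^ (s + 1) * (N : ℝ)} : ℝ)
        ≤ C * 2 ^ s * N * (Real.log N + s) ^ (d - 1) := by
  refine ⟨1 / (2 * (d + 1)), by positivity, fun η hη hηη₀ => ?_⟩
  have hdη : d * η ≤ 1 / 2 := by
    rw [lt_div_iff₀ (by positivity)] at hηη₀
    nlinarith
  refine ⟨6 ^ d * 2 ^ d * 2 * (d + 3) ^ (d - 1), fun N hN s A hA => ?_⟩
  have hN3 : (3 : ℝ) ≤ N := by exact_mod_cast hN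
  have hB : 1 ≤ 2 ^ (s + 1) * (N : ℝ) := by
    nlinarith [one_le_pow₀ (M₀ := ℝ) (n := s + 1) one_le_two]
  calc _ ≤ 6 ^ d * (2 ^ d * (2 ^ (s + 1) * N)) *
        (1 + Real.log (2 ^ d * (2 ^ (s + 1) * N))) ^ (d - 1) :=
        ncard_le_of_one_le_abs_mulVec hη.le
          (fun i j => (abs_sub_one_apply_lt_of_mem_Gset hA i j).le) hdη hB _
          fun k hk => ⟨hk.2.1, hk.2.2.2⟩
    _ ≤ 6 ^ d * (2 ^ d * (2 ^ (s + 1) * N)) * ((d + 3) * (Real.log N + s)) ^ (d - 1) := by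
        have hlog : 0 ≤ Real.log (2 ^ d * (2 ^ (s + 1) * (N : ℝ))) :=
          Real.log_nonneg (one_le_mul_of_one_le_of_one_le (one_le_pow₀ one_le_two) hB)
        gcongr
        exact one_add_log_two_pow_mul_le hN3 d s
    _ = _ := by rw [mul_pow]; ring

/-- **Counting frequencies in a dyadic range of the product of dual coordinates**:
for `η` small there is `C = C(d,η)` with
`#{k : |k_i| ≤ N, |k̄_i| ≥ 1, 2^s N ≤ ∏ |k̄_i| ≤ 2^{s+1} N} ≤ C 2^s N (ln N + s)^{d-1}`. -/
theorem dyadic_frequency_count (d : ℕ) (hd : 1 ≤ d) :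
    ∃ η₀ > (0 : ℝ), ∀ η : ℝ, 0 < η → η < η₀ →
    ∃ C : ℝ, ∀ N : ℕ, 3 ≤ N → ∀ s : ℕ, ∀ A : SLR d, A ∈ Gset d η →
      (Set.ncard {k : Fin d → ℤ | (∀ i, |k i| ≤ (N : ℤ)) ∧ (∀ i, 1 ≤ |kbar d A k i|) ∧
          2 ^ s * (N : ℝ) ≤ ∏ i, |kbar d A k i| ∧
          ∏ i, |kbar d A k i| ≤ 2 ^ (s + 1) * (N : ℝ)} : ℝ)
        ≤ C * 2 ^ s * N * (Real.log N + s) ^ (d - 1) :=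
  dyadic_frequency_count_general d
end
end

section
/- (Measure of the set of strongly resonant frequency vectors.) There is a constant C = C(d,η) such that for every integer N ≥ 3, every ε ∈ (0,1), and every A ∈ G_η: Leb{α ∈ 𝕋^d : there exists k ∈ ℤ^d with 1 ≤ |k̄_i| ≤ 2N for all i and (∏_i |k̄_i|) · dist(k·α, ℤ) < ε/(ln N)^d} ≤ C·ε, where Leb is the Haar probability measure on 𝕋^d and dist(θ,ℤ) is the distance from θ to the nearest integer. -/
/-!
For `k ≠ 0`, the linear change of variables replacing `α_j` by `k · α`, at a coordinate `j` where
`|k_j|` is maximal, shows that `{α ∈ [0,1)^d : ‖k · α‖ < δ}` has measure `O(d δ)`. Hence the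
resonant set has measure `O(ε / (ln N)^d)` times `∑ ∏_i |k̄_i|⁻¹` over the admissible `k`. As `A`
is close to the identity, distinct `k` have `k̄` at sup-distance at least `1/2`, so
`k ↦ (sign k̄_i, ⌊2 |k̄_i|⌋)_i` is injective; with `|k̄_i|⁻¹ ≤ 2 / ⌊2 |k̄_i|⌋` the sum is at most
`(6 H_{4N})^d = O((ln N)^d)`.
-/

open MeasureTheory Real Filter

noncomputable section

/-- The distance from `θ ∈ ℝ` to the nearest integer. -/
def distInt (θ : ℝ) : ℝ := |θ - round θ|

open scoped ENNReal Matrix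

theorem Matrix.det_one_updateRow {n R : Type*} [Fintype n] [DecidableEq n] [CommRing R]
    (j : n) (v : n → R) : ((1 : Matrix n n R).updateRow j v).det = v j := by
  have hv : v = ∑ i, v i • (1 : Matrix n n R) i := by
    funext l
    simp [Matrix.one_apply]
  rw [hv, Matrix.det_updateRow_sum]
  simp [Matrix.one_apply]

theorem volume_abs_le_and_distInt_lt_le (R : ℕ) (δ : ℝ) :
    volume {t : ℝ | |t| ≤ R ∧ distInt t < δ} ≤ ENNReal.ofReal ((2 * R + 1) * (2 * δ)) := by
  have hsub : {t : ℝ | |t| ≤ R ∧ distInt t < δ} ⊆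
      ⋃ n ∈ Finset.Icc (-(R : ℤ)) R, Metric.ball (n : ℝ) δ := by
    rintro t ⟨ht, htδ⟩
    have hround : |((round t : ℤ) : ℝ)| < R + 1 := by
      have := abs_sub_round t
      rw [abs_le] at ht this
      rw [abs_lt]
      constructor <;> linarith
    have hround' : |round t| ≤ R := by
      have : |round t| < R + 1 := by exact_mod_cast hround
      omega
    simp only [Set.mem_iUnion, Finset.mem_Icc, Metric.mem_ball, Real.dist_eq, exists_prop]
    exact ⟨round t, abs_le.mp hround', htδ⟩
  calc volume {t : ℝ | |t| ≤ R ∧ distInt t < δ}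
      ≤ ∑ n ∈ Finset.Icc (-(R : ℤ)) R, volume (Metric.ball (n : ℝ) δ) :=
        (measure_mono hsub).trans (measure_biUnion_finset_le _ _)
    _ = ENNReal.ofReal ((2 * R + 1) * (2 * δ)) := by
        have hcard : ((Finset.Icc (-(R : ℤ)) R).card : ℝ) = 2 * R + 1 := by
          have : ((Finset.Icc (-(R : ℤ)) R).card : ℤ) = 2 * R + 1 := by rw [Int.card_Icc]; omega
          exact_mod_cast this
        simp only [Real.volume_ball, Finset.sum_const, nsmul_eq_mul]
        rw [← hcard, ENNReal.ofReal_mul (Nat.cast_nonneg _), ENNReal.ofReal_natCast]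

def updateDotP (d : ℕ) (k : Fin d → ℤ) (j : Fin d) : (Fin d → ℝ) →ₗ[ℝ] Fin d → ℝ :=
  Matrix.toLin' ((1 : Matrix (Fin d) (Fin d) ℝ).updateRow j fun l => (k l : ℝ))

theorem updateDotP_apply (d : ℕ) (k : Fin d → ℤ) (j : Fin d) (α : Fin d → ℝ) :
    updateDotP d k j α = Function.update α j (dotP d k α) := by
  funext i
  rcases eq_or_ne i j with rfl | hij
  · simp [updateDotP, Matrix.mulVec, dotProduct, dotP]
  · simp [updateDotP, hij, Matrix.mulVec, dotProduct, Matrix.one_apply]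

theorem det_updateDotP (d : ℕ) (k : Fin d → ℤ) (j : Fin d) :
    LinearMap.det (updateDotP d k j) = k j := by
  rw [updateDotP, LinearMap.det_toLin', Matrix.det_one_updateRow]

theorem abs_dotP_le_of_mem_cube {d : ℕ} (k : Fin d → ℤ) {α : Fin d → ℝ} (hα : α ∈ cube d) :
    |dotP d k α| ≤ ∑ i, (k i).natAbs := by
  push_cast [Nat.cast_natAbs]
  refine (Finset.abs_sum_le_sum_abs _ _).trans (Finset.sum_le_sum fun i _ => ?_)
  obtain ⟨h0, h1⟩ := hα i (Set.mem_univ i)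
  rw [abs_mul, abs_of_nonneg h0]
  exact mul_le_of_le_one_right (abs_nonneg _) h1.le

theorem cube_inter_distInt_dotP_lt_subset {d : ℕ} (k : Fin d → ℤ) (j : Fin d) (δ : ℝ) :
    {α | α ∈ cube d ∧ distInt (dotP d k α) < δ} ⊆ updateDotP d k j ⁻¹'
      Set.univ.pi (Function.update (fun _ => Set.Ico 0 1) j
        {t | |t| ≤ ((∑ i, (k i).natAbs : ℕ) : ℝ) ∧ distInt t < δ}) := by
  rintro α ⟨hα, hδα⟩
  rw [Set.mem_preimage, updateDotP_apply, Set.update_mem_pi_iff]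
  refine ⟨fun i hi => ?_, fun _ => ?_⟩
  · rw [Function.update_of_ne (by simpa using hi)]
    exact hα i (Set.mem_univ i)
  · rw [Function.update_self]
    exact ⟨abs_dotP_le_of_mem_cube k hα, hδα⟩

theorem volume_preimage_updateDotP {d : ℕ} {k : Fin d → ℤ} {j : Fin d} (hkj : k j ≠ 0)
    (E : Set ℝ) :
    volume (updateDotP d k j ⁻¹' Set.univ.pi (Function.update (fun _ => Set.Ico 0 1) j E)) =
      ENNReal.ofReal ((k j).natAbs : ℝ)⁻¹ * volume E := by
  have hdet : LinearMap.det (updateDotP d k j) ≠ 0 := by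
    rw [det_updateDotP]; exact_mod_cast hkj
  rw [Measure.addHaar_preimage_linearMap _ hdet, volume_pi_pi,
    Finset.prod_congr rfl fun i _ => Function.apply_update (fun _ s => volume s) _ j E i,
    Finset.prod_update_of_mem (Finset.mem_univ j), det_updateDotP, abs_inv]
  simp [Real.volume_Ico, Nat.cast_natAbs]

theorem volume_cube_inter_distInt_dotP_lt_le {d : ℕ} {k : Fin d → ℤ} (hk : k ≠ 0) {δ : ℝ}
    (hδ : 0 ≤ δ) :
    volume {α | α ∈ cube d ∧ distInt (dotP d k α) < δ} ≤ ENNReal.ofReal ((4 * d + 2) * δ) := by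
  obtain ⟨i₀, hi₀⟩ := Function.ne_iff.mp hk
  have : Nonempty (Fin d) := ⟨i₀⟩
  obtain ⟨j, hj⟩ := Finite.exists_max fun i => (k i).natAbs
  have hkj : 1 ≤ (k j).natAbs := (Int.natAbs_pos.mpr hi₀).trans_le (hj i₀)
  set R := ∑ i, (k i).natAbs
  have hR : R ≤ d * (k j).natAbs := by
    simpa using Finset.sum_le_card_nsmul Finset.univ _ _ fun i _ => hj i
  calc volume {α | α ∈ cube d ∧ distInt (dotP d k α) < δ}
      ≤ ENNReal.ofReal ((k j).natAbs : ℝ)⁻¹ * volume {t : ℝ | |t| ≤ R ∧ distInt t < δ} := by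
        rw [← volume_preimage_updateDotP (Int.natAbs_pos.mp hkj)]
        exact measure_mono (cube_inter_distInt_dotP_lt_subset k j δ)
    _ ≤ ENNReal.ofReal ((k j).natAbs : ℝ)⁻¹ * ENNReal.ofReal ((2 * R + 1) * (2 * δ)) := by
        gcongr; exact volume_abs_le_and_distInt_lt_le R δ
    _ ≤ ENNReal.ofReal ((4 * d + 2) * δ) := by
        have h1 : (1 : ℝ) ≤ (k j).natAbs := by exact_mod_cast hkj
        have h2 : (R : ℝ) ≤ d * (k j).natAbs := by exact_mod_cast hR
        rw [← ENNReal.ofReal_mul (by positivity)]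
        refine ENNReal.ofReal_le_ofReal ?_
        rw [inv_mul_le_iff₀ (by positivity)]
        nlinarith

theorem abs_sub_one_apply_le_of_mem_Gset {d : ℕ} {η : ℝ} {A : SLR d} (hA : A ∈ Gset d η)
    (i j : Fin d) : |(A.1 - 1) i j| ≤ η := by
  rcases eq_or_ne i j with rfl | hij
  · simpa using (hA.1 i).le
  · simpa [Matrix.one_apply_ne hij] using (hA.2 i j hij).le

theorem le_abs_mulVec_apply {n : Type*} [Fintype n] [DecidableEq n] {M : Matrix n n ℝ} {η : ℝ}
    (hM : ∀ i j, |(M - 1) i j| ≤ η) {v : n → ℝ} {i : n} (hi : ∀ j, |v j| ≤ |v i|) :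
    (1 - Fintype.card n * η) * |v i| ≤ |(M *ᵥ v) i| := by
  have hη : 0 ≤ η := (abs_nonneg _).trans (hM i i)
  have hsplit : (M *ᵥ v) i = v i + ((M - 1) *ᵥ v) i := by
    rw [Matrix.sub_mulVec, Matrix.one_mulVec, Pi.sub_apply]; ring
  have herr : |((M - 1) *ᵥ v) i| ≤ Fintype.card n * η * |v i| := by
    calc |((M - 1) *ᵥ v) i| ≤ ∑ j, |(M - 1) i j * v j| := Finset.abs_sum_le_sum_abs _ _
      _ = ∑ j, |(M - 1) i j| * |v j| := by simp only [abs_mul]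
      _ ≤ ∑ _j : n, η * |v i| :=
          Finset.sum_le_sum fun j _ => mul_le_mul (hM i j) (hi j) (abs_nonneg _) hη
      _ = Fintype.card n * η * |v i| := by simp [mul_assoc]
  rw [hsplit]
  have := abs_add_le (v i + ((M - 1) *ᵥ v) i) (-((M - 1) *ᵥ v) i)
  rw [add_neg_cancel_right, abs_neg] at this
  linarith

def coarse (x : ℝ) : SignType × ℕ := (SignType.sign x, ⌊2 * |x|⌋₊)

theorem abs_sub_lt_of_coarse_eq {x y : ℝ} (h : coarse x = coarse y) : |x - y| < 1 / 2 := by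
  simp only [coarse, Prod.mk.injEq] at h
  obtain ⟨hsign, hfloor⟩ := h
  have hxy : |x - y| ≤ |(|x| - |y|)| := by
    conv_lhs => rw [← sign_mul_abs x, ← sign_mul_abs y, ← hsign, ← mul_sub, abs_mul]
    exact mul_le_of_le_one_left (abs_nonneg _) (by rcases SignType.sign x with _ | _ | _ <;> simp)
  have h₁ := Nat.floor_le (by positivity : 0 ≤ 2 * |x|)
  have h₂ := Nat.lt_floor_add_one (2 * |x|)
  have h₃ := Nat.floor_le (by positivity : 0 ≤ 2 * |y|)
  have h₄ := Nat.lt_floor_add_one (2 * |y|)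
  rw [hfloor] at h₁ h₂
  have : |(|x| - |y|)| < 1 / 2 := by rw [abs_sub_lt_iff]; constructor <;> linarith
  linarith

theorem kbar_sub_kbar (d : ℕ) (A : SLR d) (k k' : Fin d → ℤ) (i : Fin d) :
    kbar d A k i - kbar d A k' i = (A.1 *ᵥ fun j => ((k j - k' j : ℤ) : ℝ)) i := by
  simp only [kbar, Matrix.mulVec, dotProduct, ← Finset.sum_sub_distrib, ← mul_sub, Int.cast_sub]

theorem coarse_kbar_injective {d : ℕ} {η : ℝ} {A : SLR d} (hA : A ∈ Gset d η)
    (hη : d * η ≤ 1 / 2) : Function.Injective fun k i => coarse (kbar d A k i) := by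
  intro k k' h
  by_contra hne
  obtain ⟨i₀, hi₀⟩ := Function.ne_iff.mp hne
  have : Nonempty (Fin d) := ⟨i₀⟩
  obtain ⟨i, hi⟩ := Finite.exists_max fun j => |k j - k' j|
  set v : Fin d → ℝ := fun j => ((k j - k' j : ℤ) : ℝ)
  have hvi : 1 ≤ |v i| := by
    have : 1 ≤ |k i - k' i| := (Int.one_le_abs (sub_ne_zero.mpr hi₀)).trans (hi i₀)
    simpa [v] using (by exact_mod_cast this : (1 : ℝ) ≤ ((|k i - k' i| : ℤ) : ℝ))
  have hv : ∀ j, |v j| ≤ |v i| := fun j => by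
    simpa [v] using (by exact_mod_cast hi j : ((|k j - k' j| : ℤ) : ℝ) ≤ ((|k i - k' i| : ℤ) : ℝ))
  have hfar := le_abs_mulVec_apply (abs_sub_one_apply_le_of_mem_Gset hA) hv
  have hnear : |(A.1 *ᵥ v) i| < 1 / 2 :=
    kbar_sub_kbar d A k k' i ▸ abs_sub_lt_of_coarse_eq (congrFun h i)
  rw [Fintype.card_fin] at hfar
  nlinarith

def coarseWeight (N : ℕ) (p : SignType × ℕ) : ℝ≥0∞ :=
  if p.2 ∈ Finset.Icc 1 (4 * N) then ENNReal.ofReal (2 / p.2) else 0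

theorem ofReal_inv_abs_le_coarseWeight {N : ℕ} {x : ℝ} (h1 : 1 ≤ |x|) (h2 : |x| ≤ 2 * N) :
    ENNReal.ofReal |x|⁻¹ ≤ coarseWeight N (coarse x) := by
  have hm1 : 1 ≤ ⌊2 * |x|⌋₊ := Nat.le_floor (by push_cast; linarith)
  have hm2 : ⌊2 * |x|⌋₊ ≤ 4 * N := Nat.floor_le_of_le (by push_cast; linarith)
  have hmx : (⌊2 * |x|⌋₊ : ℝ) ≤ 2 * |x| := Nat.floor_le (by positivity)
  have hm0 : (0 : ℝ) < ⌊2 * |x|⌋₊ := by exact_mod_cast hm1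
  rw [coarseWeight, if_pos (show (coarse x).2 ∈ _ from Finset.mem_Icc.mpr ⟨hm1, hm2⟩)]
  refine ENNReal.ofReal_le_ofReal (?_ : |x|⁻¹ ≤ 2 / (⌊2 * |x|⌋₊ : ℝ))
  rw [inv_eq_one_div, div_le_div_iff₀ (by linarith) hm0]
  linarith

theorem tsum_pi_prod_eq_sum_pow {ι β R : Type*} [Fintype ι] [DecidableEq ι] [CommSemiring R]
    [TopologicalSpace R] {g : β → R} (s : Finset β) (hg : ∀ b ∉ s, g b = 0) :
    ∑' v : ι → β, ∏ i, g (v i) = (∑ b ∈ s, g b) ^ Fintype.card ι := by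
  rw [tsum_eq_sum (s := Fintype.piFinset fun _ => s), ← Finset.prod_univ_sum, Finset.prod_const,
    Finset.card_univ]
  intro v hv
  obtain ⟨i, hi⟩ : ∃ i, v i ∉ s := by simpa [Fintype.mem_piFinset] using hv
  exact Finset.prod_eq_zero (Finset.mem_univ i) (hg _ hi)

theorem one_le_log_of_three_le {N : ℕ} (hN : 3 ≤ N) : 1 ≤ log N := by
  rw [le_log_iff_exp_le (by positivity)]
  have : (3 : ℝ) ≤ N := by exact_mod_cast hN
  linarith [exp_one_lt_d9]

theorem harmonic_four_mul_le {N : ℕ} (hN : 3 ≤ N) : (harmonic (4 * N) : ℝ) ≤ 5 * log N := by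
  have hlog4 : log 4 ≤ 3 := by linarith [log_le_sub_one_of_pos (by norm_num : (0 : ℝ) < 4)]
  have hlogN := one_le_log_of_three_le hN
  have h4N : log (4 * N : ℕ) = log 4 + log N := by
    push_cast; exact log_mul (by norm_num) (by positivity)
  linarith [harmonic_le_one_add_log (4 * N)]

theorem sum_coarseWeight_le {N : ℕ} (hN : 3 ≤ N) :
    ∑ p ∈ Finset.univ ×ˢ Finset.Icc 1 (4 * N), coarseWeight N p ≤ ENNReal.ofReal (30 * log N) := by
  have hsum : ∑ p ∈ Finset.univ ×ˢ Finset.Icc 1 (4 * N), coarseWeight N p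
      = ENNReal.ofReal (6 * harmonic (4 * N)) := by
    rw [Finset.sum_product]
    simp only [coarseWeight]
    rw [Finset.sum_const, show (Finset.univ : Finset SignType).card = 3 from rfl,
      Finset.sum_congr rfl fun m hm => if_pos hm,
      ← ENNReal.ofReal_sum_of_nonneg (by intros; positivity), harmonic_eq_sum_Icc,
      nsmul_eq_mul, ← ENNReal.ofReal_natCast, ← ENNReal.ofReal_mul (by norm_num)]
    push_cast
    rw [Finset.mul_sum, Finset.mul_sum]
    congr 1
    refine Finset.sum_congr rfl fun m _ => ?_
    ring
  rw [hsum]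
  exact ENNReal.ofReal_le_ofReal (by linarith [harmonic_four_mul_le hN])

theorem tsum_pi_prod_coarseWeight_le (d : ℕ) {N : ℕ} (hN : 3 ≤ N) :
    ∑' v : Fin d → SignType × ℕ, ∏ i, coarseWeight N (v i) ≤ ENNReal.ofReal (30 * log N) ^ d := by
  rw [tsum_pi_prod_eq_sum_pow (Finset.univ ×ˢ Finset.Icc 1 (4 * N)), Fintype.card_fin]
  · gcongr; exact sum_coarseWeight_le hN
  · intro p hp
    simp_all [coarseWeight]

def resonantPiece (d : ℕ) (A : SLR d) (N : ℕ) (r : ℝ) (k : Fin d → ℤ) : Set (Fin d → ℝ) :=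
  {α | α ∈ cube d ∧ (∀ i, 1 ≤ |kbar d A k i| ∧ |kbar d A k i| ≤ 2 * N) ∧
    (∏ i, |kbar d A k i|) * distInt (dotP d k α) < r}

theorem volume_resonantPiece_le {d : ℕ} (hd : 1 ≤ d) (A : SLR d) (N : ℕ) {r : ℝ} (hr : 0 ≤ r)
    (k : Fin d → ℤ) :
    volume (resonantPiece d A N r k) ≤
      ENNReal.ofReal ((4 * d + 2) * r) * ∏ i, coarseWeight N (coarse (kbar d A k i)) := by
  by_cases hk : ∀ i, 1 ≤ |kbar d A k i| ∧ |kbar d A k i| ≤ 2 * N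
  swap
  · simp [resonantPiece, hk]
  have hk0 : k ≠ 0 := by
    rintro rfl
    have := (hk ⟨0, hd⟩).1
    norm_num [kbar] at this
  have hP : 1 ≤ ∏ i, |kbar d A k i| := Finset.one_le_prod fun i _ => (hk i).1
  calc volume (resonantPiece d A N r k)
      ≤ volume {α | α ∈ cube d ∧ distInt (dotP d k α) < r / ∏ i, |kbar d A k i|} := by
        refine measure_mono fun α ⟨hα, _, hlt⟩ => ⟨hα, ?_⟩
        rw [lt_div_iff₀ (by linarith)]
        linarith
    _ ≤ ENNReal.ofReal ((4 * d + 2) * (r / ∏ i, |kbar d A k i|)) :=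
        volume_cube_inter_distInt_dotP_lt_le hk0 (by positivity)
    _ = ENNReal.ofReal ((4 * d + 2) * r) * ∏ i, ENNReal.ofReal |kbar d A k i|⁻¹ := by
        rw [← ENNReal.ofReal_prod_of_nonneg (fun i _ => by positivity),
          ← ENNReal.ofReal_mul (by positivity), Finset.prod_inv_distrib, mul_assoc, div_eq_mul_inv]
    _ ≤ ENNReal.ofReal ((4 * d + 2) * r) * ∏ i, coarseWeight N (coarse (kbar d A k i)) := by
        gcongr with i
        exact ofReal_inv_abs_le_coarseWeight (hk i).1 (hk i).2

theorem volume_iUnion_resonantPiece_le {d : ℕ} (hd : 1 ≤ d) {η : ℝ} {A : SLR d}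
    (hA : A ∈ Gset d η) (hη : d * η ≤ 1 / 2) {N : ℕ} (hN : 3 ≤ N) {r : ℝ} (hr : 0 ≤ r) :
    volume (⋃ k, resonantPiece d A N r k) ≤
      ENNReal.ofReal ((4 * d + 2) * r) * ENNReal.ofReal (30 * log N) ^ d := by
  set c := ENNReal.ofReal ((4 * d + 2) * r)
  calc volume (⋃ k, resonantPiece d A N r k)
      ≤ ∑' k, c * ∏ i, coarseWeight N (coarse (kbar d A k i)) :=
        (measure_iUnion_le _).trans (ENNReal.tsum_le_tsum (volume_resonantPiece_le hd A N hr))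
    _ = c * ∑' k, ∏ i, coarseWeight N (coarse (kbar d A k i)) := ENNReal.tsum_mul_left
    _ ≤ c * ∑' v : Fin d → SignType × ℕ, ∏ i, coarseWeight N (v i) := by
        gcongr
        exact ENNReal.tsum_comp_le_tsum_of_injective (coarse_kbar_injective hA hη)
          fun v => ∏ i, coarseWeight N (v i)
    _ ≤ c * ENNReal.ofReal (30 * log N) ^ d := by
        gcongr
        exact tsum_pi_prod_coarseWeight_le d hN

/-- **Measure of the set of strongly resonant frequency vectors**: for `η` small there is
`C = C(d,η)` such that for all `N ≥ 3`, `ε ∈ (0,1)` and `A ∈ G_η`, the Haar measure of the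
set of `α ∈ 𝕋^d` for which some `k ∈ ℤ^d` satisfies `1 ≤ |k̄_i| ≤ 2N` for all `i` and
`(∏_i |k̄_i|) ‖k·α‖ < ε/(ln N)^d` is at most `C ε`. -/
theorem strongly_resonant_set_measure_bound (d : ℕ) (hd : 1 ≤ d) :
    ∃ η₀ > (0 : ℝ), ∀ η : ℝ, 0 < η → η < η₀ →
    ∃ C : ℝ, ∀ N : ℕ, 3 ≤ N → ∀ ε : ℝ, 0 < ε → ε < 1 → ∀ A : SLR d, A ∈ Gset d η →
      volume {α : Fin d → ℝ | α ∈ cube d ∧ ∃ k : Fin d → ℤ,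
          (∀ i, 1 ≤ |kbar d A k i| ∧ |kbar d A k i| ≤ 2 * N) ∧
          (∏ i, |kbar d A k i|) * distInt (dotP d k α) < ε / Real.log N ^ d}
        ≤ ENNReal.ofReal (C * ε) := by
  have hd₀ : (0 : ℝ) < d := by exact_mod_cast hd
  refine ⟨1 / (2 * d), by positivity, fun η _ hη => ⟨(4 * d + 2) * 30 ^ d, ?_⟩⟩
  intro N hN ε hε _ A hA
  have hηd : d * η ≤ 1 / 2 := by
    rw [lt_div_iff₀ (by positivity)] at hη
    linarith
  have hlog : 0 < log N := one_pos.trans_le (one_le_log_of_three_le hN)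
  calc _ ≤ volume (⋃ k, resonantPiece d A N (ε / log N ^ d) k) := by
        refine measure_mono ?_
        rintro α ⟨hα, k, hk, hlt⟩
        exact Set.mem_iUnion.mpr ⟨k, hα, hk, hlt⟩
    _ ≤ ENNReal.ofReal ((4 * d + 2) * (ε / log N ^ d)) * ENNReal.ofReal (30 * log N) ^ d :=
        volume_iUnion_resonantPiece_le hd hA hηd hN (by positivity)
    _ = ENNReal.ofReal ((4 * d + 2) * 30 ^ d * ε) := by
        rw [← ENNReal.ofReal_pow (by positivity), ← ENNReal.ofReal_mul (by positivity)]
        congr 1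
        field_simp
        ring
end
end
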